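/- arXiv:2003.00267 — 6 statements merged into one kernel-verified Lean document; each statement's English description precedes it below -/
import Mathlib

section
/- An affine permutation ω is decomposable if and only if its inversion graph G(ω) is not connected. -/
/-- `σ : ℤ → ℤ` is an affine permutation of size `n` (values indexed 1,…,n). -/
def IsAffinePerm (n : ℕ) (σ : ℤ → ℤ) : Prop :=
  Function.Bijective σ ∧ (∀ i : ℤ, σ (i + n) = σ i + n) ∧
    (∑ i ∈ Finset.Icc (1 : ℤ) (n : ℤ), σ i) = ∑ i ∈ Finset.Icc (1 : ℤ) (n : ℤ), i

/-- Bounded affine permutation of size `n`. -/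
def IsBoundedAffinePerm (n : ℕ) (σ : ℤ → ℤ) : Prop :=
  IsAffinePerm n σ ∧ ∀ i : ℤ, |σ i - i| < (n : ℤ)

/-- Ordinary pattern containment. -/
def PermContains {n k : ℕ} (π : Equiv.Perm (Fin n)) (τ : Equiv.Perm (Fin k)) : Prop :=
  ∃ f : Fin k → Fin n, StrictMono f ∧ ∀ s t : Fin k, τ s < τ t ↔ π (f s) < π (f t)

/-- A function `σ : ℤ → ℤ` contains the ordinary pattern `τ`. -/
def AffContains {k : ℕ} (σ : ℤ → ℤ) (τ : Equiv.Perm (Fin k)) : Prop :=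
  ∃ f : Fin k → ℤ, StrictMono f ∧ ∀ s t : Fin k, τ s < τ t ↔ σ (f s) < σ (f t)

/-- The shift `Σ^r σ`. -/
def shiftPerm (r : ℤ) (σ : ℤ → ℤ) : ℤ → ℤ := fun i => σ (i - r) + r

/-- The infinite sum `⊕π : ℤ → ℤ` of a permutation `π` of size `n ≥ 1`,
with the convention that `π` acts (1-indexed) on `{1,…,n}`. -/
def infiniteSum {n : ℕ} (hn : 0 < n) (π : Equiv.Perm (Fin n)) : ℤ → ℤ := fun i =>
  ((π ⟨((i - 1) % (n : ℤ)).toNat, by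
      have h0 : (0 : ℤ) < (n : ℤ) := by exact_mod_cast hn
      have h1 : 0 ≤ (i - 1) % (n : ℤ) := Int.emod_nonneg _ h0.ne'
      have h2 : (i - 1) % (n : ℤ) < (n : ℤ) := Int.emod_lt_of_pos _ h0
      omega⟩ : Fin n).val : ℤ) + 1 + (n : ℤ) * ((i - 1) / (n : ℤ))

/-- `aff(C)`: all shifts of infinite sums of members of `C`. -/
def AffOfClass (C : (n : ℕ) → Set (Equiv.Perm (Fin n))) : Set (ℤ → ℤ) :=
  {σ | ∃ (m : ℕ) (hm : 0 < m) (π : Equiv.Perm (Fin m)) (r : ℤ),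
      π ∈ C m ∧ σ = shiftPerm r (infiniteSum hm π)}

/-- The direct sum `σ ⊕ ρ` of two permutations. -/
def permDirectSum {a b : ℕ} (σ : Equiv.Perm (Fin a)) (ρ : Equiv.Perm (Fin b)) :
    Equiv.Perm (Fin (a + b)) :=
  finSumFinEquiv.symm.trans ((Equiv.sumCongr σ ρ).trans finSumFinEquiv)

/-- A permutation is sum-indecomposable if it is not a sum of two permutations of nonzero size. -/
def IsSumIndecomposable {n : ℕ} (π : Equiv.Perm (Fin n)) : Prop :=
  ¬ ∃ (a b : ℕ) (_ : 0 < a) (_ : 0 < b) (h : a + b = n)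
      (σ : Equiv.Perm (Fin a)) (ρ : Equiv.Perm (Fin b)),
      π = (finCongr h).permCongr (permDirectSum σ ρ)

/-- `π` maps the first `d` positions onto the first `d` values. -/
def IsPrefixInvariant {n : ℕ} (π : Equiv.Perm (Fin n)) (d : ℕ) : Prop :=
  ∀ i : Fin n, ((π i : ℕ) < d ↔ (i : ℕ) < d)

/-- `a(π)`: the size of the first sum-indecomposable block of `π`. -/
noncomputable def firstBlockSize {n : ℕ} (π : Equiv.Perm (Fin n)) : ℕ :=
  sInf {d : ℕ | 1 ≤ d ∧ d ≤ n ∧ IsPrefixInvariant π d}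

/-- `χ(π)`: the number of sum-indecomposable blocks of `π`. -/
noncomputable def numBlocks {n : ℕ} (π : Equiv.Perm (Fin n)) : ℕ :=
  Set.ncard {d : ℕ | 1 ≤ d ∧ d ≤ n ∧ IsPrefixInvariant π d}

/-- `C` is a permutation class: it is closed under pattern containment. -/
def IsPermClass (C : (n : ℕ) → Set (Equiv.Perm (Fin n))) : Prop :=
  ∀ (n k : ℕ) (π : Equiv.Perm (Fin n)) (τ : Equiv.Perm (Fin k)),
    π ∈ C n → PermContains π τ → τ ∈ C k

/-- `C` is sum closed. -/
def IsSumClosed (C : (n : ℕ) → Set (Equiv.Perm (Fin n))) : Prop :=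
  ∀ (a b : ℕ) (σ : Equiv.Perm (Fin a)) (ρ : Equiv.Perm (Fin b)),
    σ ∈ C a → ρ ∈ C b → permDirectSum σ ρ ∈ C (a + b)

/-- The infinite increasing oscillation `𝒪`. -/
def oscillO : ℤ → ℤ := fun i => if Odd i then i + 2 else i - 2

/-- An affine permutation is decomposable if it is a shift of an infinite sum. -/
def IsDecomposableAffine (ω : ℤ → ℤ) : Prop :=
  ∃ (r : ℤ) (m : ℕ) (hm : 0 < m) (π : Equiv.Perm (Fin m)),
    ω = shiftPerm r (infiniteSum hm π)

/-- Containment of one `ℤ → ℤ` permutation in another. -/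
def ContainsAffine (ω ω' : ℤ → ℤ) : Prop :=
  ∃ φ φ' : ℤ → ℤ, StrictMono φ ∧ StrictMono φ' ∧ ∀ i : ℤ, ω (φ i) = φ' (ω' i)

/-- The inversion graph of a function `ℤ → ℤ`. -/
def invGraph (ω : ℤ → ℤ) : SimpleGraph ℤ where
  Adj i j := (i < j ∧ ω j < ω i) ∨ (j < i ∧ ω i < ω j)
  symm := ⟨fun _ _ h => Or.symm h⟩
  loopless := ⟨by rintro i (⟨h, -⟩ | ⟨h, -⟩) <;> exact lt_irrefl i h⟩

/-- Number of excedances of a permutation (1-indexed: positions `i` with `π(i) > i`). -/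
def excCount {n : ℕ} (π : Equiv.Perm (Fin n)) : ℕ :=
  (Finset.univ.filter fun i => i < π i).card

/-- Number of fixed points of a permutation. -/
def numFixedPoints {n : ℕ} (π : Equiv.Perm (Fin n)) : ℕ :=
  (Finset.univ.filter fun i => π i = i).card

/-- Eulerian number `a(n,k)`: permutations of size `n` with `k` excedances. -/
noncomputable def eulerianA (n k : ℕ) : ℕ := Nat.card {π : Equiv.Perm (Fin n) // excCount π = k}

/-- Derangement Eulerian number `d(n,k)`. -/
noncomputable def derangD (n k : ℕ) : ℕ :=
  Nat.card {π : Equiv.Perm (Fin n) // (∀ i, π i ≠ i) ∧ excCount π = k}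

/-! Call `s` a cut of `ω` if `ω` maps `(-∞, s]` entirely below `(s, ∞)`. No edge of the
inversion graph crosses a cut. Conversely, if there is no cut at `s`, some inversion `i ≤ s < j`
exists, and every `k ∈ [i, j]` is adjacent to `i` or to `j`, so `s` and `s + 1` are joined;
without any cut the graph is connected.

An affine permutation with a cut at `s` maps `(-∞, s]` onto a down-set `(-∞, t]`, hence by
periodicity the window `(s, s + n]` onto `(t, t + n]`. Summing `ω j - j` over the window, which
is `0` by the sum condition, gives `n (t - s) = 0`. So `ω` permutes every window
`(s + kn, s + (k+1)n]` in the same way: it is the shift by `s` of an infinite sum. -/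

open Finset in
lemma Finset.sum_Ioc_add_natCast {M : Type*} [AddCommMonoid M] (f : ℤ → M) (a : ℤ) (n : ℕ) :
    ∑ j ∈ Ioc a (a + n), f j = ∑ k ∈ range n, f (a + 1 + k) := by
  induction n with
  | zero => simp
  | succ n ih =>
    rw [Nat.cast_succ, ← add_assoc, ← insert_Ioc_right_eq_Ioc_add_one (by omega),
      sum_insert (by simp), sum_range_succ, ih, add_comm, add_right_comm]

open Finset in
lemma Function.Periodic.sum_Ioc_add {M : Type*} [AddCancelCommMonoid M] {f : ℤ → M} {n : ℕ}
    (hf : Function.Periodic f n) (a : ℤ) :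
    ∑ j ∈ Ioc a (a + n), f j = ∑ j ∈ Ioc 0 (n : ℤ), f j := by
  set F : ℤ → M := fun a => ∑ j ∈ Ioc a (a + n), f j
  have hF : Function.Periodic F 1 := fun a => by
    simp only [F, sum_Ioc_add_natCast]
    have h := sum_range_succ' (fun k : ℕ => f (a + 1 + k)) n
    rw [sum_range_succ, Nat.cast_zero, add_zero, ← hf (a + 1), add_left_inj] at h
    rw [h]
    exact sum_congr rfl fun k _ => by push_cast; ring_nf
  simpa [F] using hF.int_mul a 0

lemma apply_add_mul_of_apply_add {g : ℤ → ℤ} {c : ℤ} (hg : ∀ i, g (i + c) = g i + c)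
    (k i : ℤ) : g (i + k * c) = g i + k * c := by
  have hper : Function.Periodic (fun i => g i - i) c := fun i => by simp only [hg]; ring
  have : g (i + k * c) - (i + k * c) = g i - i := hper.int_mul k i
  linarith

lemma shiftPerm_shiftPerm (r r' : ℤ) (σ : ℤ → ℤ) :
    shiftPerm r (shiftPerm r' σ) = shiftPerm (r + r') σ := by
  funext i; simp only [shiftPerm]; ring_nf

lemma shiftPerm_zero (σ : ℤ → ℤ) : shiftPerm 0 σ = σ := by
  funext i; simp [shiftPerm]

lemma exists_fin_eq_add_one_add_mul {n : ℕ} (hn : 0 < n) (i : ℤ) :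
    ∃ (j : Fin n) (q : ℤ), i = j + 1 + n * q := by
  have h0 : (0 : ℤ) < n := by exact_mod_cast hn
  have hr := Int.emod_nonneg (i - 1) h0.ne'
  have hr' := Int.emod_lt_of_pos (i - 1) h0
  refine ⟨⟨((i - 1) % n).toNat, by omega⟩, (i - 1) / n, ?_⟩
  have := Int.emod_add_mul_ediv (i - 1) n
  simp only [Int.toNat_of_nonneg hr]
  omega

lemma infiniteSum_apply_add_one_add_mul {n : ℕ} (hn : 0 < n) (π : Equiv.Perm (Fin n))
    (j : Fin n) (q : ℤ) : infiniteSum hn π (j + 1 + n * q) = π j + 1 + n * q := by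
  have h0 : (n : ℤ) ≠ 0 := by exact_mod_cast hn.ne'
  have hj : (0 : ℤ) ≤ j ∧ (j : ℤ) < n := ⟨by positivity, by exact_mod_cast j.isLt⟩
  have hi : (j : ℤ) + 1 + n * q - 1 = j + n * q := by ring
  have hr : ((j : ℤ) + 1 + n * q - 1) % n = j := by
    rw [hi, Int.add_mul_emod_self_left, Int.emod_eq_of_lt hj.1 hj.2]
  have hq : ((j : ℤ) + 1 + n * q - 1) / n = q := by
    rw [hi, Int.add_mul_ediv_left _ _ h0, Int.ediv_eq_zero_of_lt hj.1 hj.2,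
      zero_add]
  simp only [infiniteSum, hr, hq, Int.toNat_natCast, Fin.eta]

lemma eq_infiniteSum_of_apply_add {n : ℕ} (hn : 0 < n) (π : Equiv.Perm (Fin n)) {g : ℤ → ℤ}
    (hg : ∀ i, g (i + n) = g i + n) (hπ : ∀ j : Fin n, g (j + 1) = π j + 1) :
    g = infiniteSum hn π := by
  funext i
  obtain ⟨j, q, rfl⟩ := exists_fin_eq_add_one_add_mul hn i
  rw [infiniteSum_apply_add_one_add_mul, mul_comm, apply_add_mul_of_apply_add hg, hπ]

lemma infiniteSum_pos_iff {n : ℕ} (hn : 0 < n) (π : Equiv.Perm (Fin n)) (i : ℤ) :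
    0 < infiniteSum hn π i ↔ 0 < i := by
  obtain ⟨j, q, rfl⟩ := exists_fin_eq_add_one_add_mul hn i
  rw [infiniteSum_apply_add_one_add_mul]
  have hj : (j : ℤ) < n := by exact_mod_cast j.isLt
  have hπj : ((π j : ℕ) : ℤ) < n := by exact_mod_cast (π j).isLt
  constructor <;> intro h <;> rcases lt_or_ge q 0 with hq | hq <;> nlinarith

lemma exists_eq_infiniteSum {n : ℕ} (hn : 0 < n) {g : ℤ → ℤ} (hg : ∀ i, g (i + n) = g i + n)
    (hmaps : Set.MapsTo g (Set.Ioc 0 n) (Set.Ioc 0 n)) (hinj : Set.InjOn g (Set.Ioc 0 n)) :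
    ∃ π : Equiv.Perm (Fin n), g = infiniteSum hn π := by
  have hwin (j : Fin n) : (j + 1 : ℤ) ∈ Set.Ioc (0 : ℤ) n :=
    ⟨by positivity, by have := j.isLt; omega⟩
  let f : Fin n → Fin n := fun j =>
    ⟨(g (j + 1) - 1).toNat, by have := hmaps (hwin j); simp only [Set.mem_Ioc] at this; omega⟩
  have hf : Function.Injective f := fun j k hjk => by
    have hj := hmaps (hwin j)
    have hk := hmaps (hwin k)
    simp only [f, Fin.mk.injEq, Set.mem_Ioc] at hjk hj hk
    have := hinj (hwin j) (hwin k) (by omega)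
    exact Fin.ext (by omega)
  refine ⟨Equiv.ofBijective f (Finite.injective_iff_bijective.mp hf),
    eq_infiniteSum_of_apply_add hn _ hg fun j => ?_⟩
  have := hmaps (hwin j)
  simp only [Equiv.ofBijective_apply, f, Set.mem_Ioc] at this ⊢
  omega

def HasCut (ω : ℤ → ℤ) (s : ℤ) : Prop := ∀ i j : ℤ, i ≤ s → s < j → ω i < ω j

lemma IsDecomposableAffine.exists_hasCut {ω : ℤ → ℤ} (h : IsDecomposableAffine ω) :
    ∃ s, HasCut ω s := by
  obtain ⟨r, m, hm, π, rfl⟩ := h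
  refine ⟨r, fun i j hi hj => ?_⟩
  have hi' := (infiniteSum_pos_iff hm π (i - r)).not.mpr (by omega)
  have hj' := (infiniteSum_pos_iff hm π (j - r)).mpr (by omega)
  simp only [shiftPerm]
  omega

lemma HasCut.not_connected {ω : ℤ → ℤ} {s : ℤ} (hs : HasCut ω s) :
    ¬ (invGraph ω).Connected := fun hconn => by
  obtain ⟨d, -, hd, hd'⟩ := (hconn.preconnected s (s + 1)).some.exists_boundary_dart
    (Set.Iic s) Set.self_mem_Iic (by simp)
  simp only [Set.mem_Iic, not_le] at hd hd'
  rcases d.adj with ⟨-, h⟩ | ⟨h, -⟩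
  · exact (hs _ _ hd hd').not_gt h
  · exact (hd.trans_lt hd').not_gt h

lemma invGraph_reachable_of_inversion {ω : ℤ → ℤ} (hinj : Function.Injective ω) {i j k : ℤ}
    (hij : i < j) (hinv : ω j < ω i) (hk : k ∈ Set.Icc i j) : (invGraph ω).Reachable i k := by
  have hadj : (invGraph ω).Adj i j := Or.inl ⟨hij, hinv⟩
  obtain rfl | hik := hk.1.eq_or_lt
  · rfl
  rcases lt_or_gt_of_ne (hinj.ne (ne_of_gt hik)) with hlt | hgt
  · exact SimpleGraph.Adj.reachable (G := invGraph ω) (Or.inl ⟨hik, hlt⟩)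
  · obtain rfl | hkj := hk.2.eq_or_lt
    · exact hadj.reachable
    exact hadj.reachable.trans
      (SimpleGraph.Adj.reachable (G := invGraph ω) (Or.inr ⟨hkj, hinv.trans hgt⟩))

lemma invGraph_reachable_add_one {ω : ℤ → ℤ} (hinj : Function.Injective ω) {s : ℤ}
    (hs : ¬ HasCut ω s) : (invGraph ω).Reachable s (s + 1) := by
  simp only [HasCut, not_forall, not_lt] at hs
  obtain ⟨i, j, hi, hj, hji⟩ := hs
  have hinv : ω j < ω i := hji.lt_of_ne (hinj.ne (by omega))
  exact (invGraph_reachable_of_inversion hinj (by omega) hinv ⟨hi, by omega⟩).symm.trans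
    (invGraph_reachable_of_inversion hinj (by omega) hinv ⟨by omega, hj⟩)

lemma invGraph_connected_of_forall_not_hasCut {ω : ℤ → ℤ} (hinj : Function.Injective ω)
    (h : ∀ s, ¬ HasCut ω s) : (invGraph ω).Connected := by
  refine (SimpleGraph.connected_iff_exists_forall_reachable _).mpr ⟨0, fun i => ?_⟩
  induction i using Int.induction_on with
  | zero => rfl
  | succ i ih => exact ih.trans (invGraph_reachable_add_one hinj (h i))
  | pred i ih =>
    exact ih.trans (by simpa using (invGraph_reachable_add_one hinj (h (-i - 1))).symm)

lemma HasCut.exists_image_Iic_eq {ω : ℤ → ℤ} {s : ℤ} (hs : HasCut ω s)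
    (hsurj : Function.Surjective ω) : ∃ t, ω '' Set.Iic s = Set.Iic t := by
  set S := ω '' Set.Iic s
  have hlower : IsLowerSet S := by
    rintro _ y hy ⟨i, hi, rfl⟩
    obtain ⟨j, rfl⟩ := hsurj y
    exact ⟨j, not_lt.mp fun hj => (hs i j hi hj).not_ge hy, rfl⟩
  have hne : S.Nonempty := ⟨ω s, s, Set.self_mem_Iic, rfl⟩
  have hbdd : BddAbove S := ⟨ω (s + 1), by
    rintro _ ⟨i, hi, rfl⟩
    exact (hs i (s + 1) hi (lt_add_one s)).le⟩
  exact ⟨sSup S, Set.ext fun y =>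
    ⟨fun hy => le_csSup hbdd hy, fun hy => hlower hy (Int.csSup_mem hne hbdd)⟩⟩

lemma image_Ioc_eq_of_image_Iic_eq {ω : ℤ → ℤ} {c s t : ℤ} (hper : ∀ i, ω (i + c) = ω i + c)
    (hinj : Function.Injective ω) (ht : ω '' Set.Iic s = Set.Iic t) :
    ω '' Set.Ioc s (s + c) = Set.Ioc t (t + c) := by
  have ht' : ω '' Set.Iic (s + c) = Set.Iic (t + c) := by
    rw [← Set.image_add_const_Iic, ← Set.image_add_const_Iic, ← ht, Set.image_image,
      Set.image_image]
    simp only [hper]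
  rw [← Set.Iic_sdiff_Iic, Set.image_sdiff hinj, ht, ht', Set.Iic_sdiff_Iic]

open Finset in
lemma IsAffinePerm.eq_of_image_Ioc_eq {n : ℕ} (hn : 0 < n) {ω : ℤ → ℤ} (hω : IsAffinePerm n ω)
    {s t : ℤ} (h : ω '' Set.Ioc s (s + n) = Set.Ioc t (t + n)) : t = s := by
  obtain ⟨hbij, hper, hsum⟩ := hω
  have himage : (Ioc s (s + n)).image ω = Ioc t (t + n) :=
    coe_injective (by push_cast; exact h)
  have hdisp : ∑ j ∈ Ioc s (s + n), (ω j - j) = 0 := by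
    have hperiodic : Function.Periodic (fun j => ω j - j) n := fun j => by
      simp only [hper]; ring
    rw [hperiodic.sum_Ioc_add, ← Icc_add_one_left_eq_Ioc, zero_add, sum_sub_distrib, hsum,
      sub_self]
  have hshift : ∑ j ∈ Ioc t (t + n), j - ∑ j ∈ Ioc s (s + n), j = n * (t - s) := by
    rw [sum_Ioc_add_natCast, sum_Ioc_add_natCast, ← sum_sub_distrib]
    simp only [add_sub_add_right_eq_sub, sum_const, card_range, nsmul_eq_mul]
  rw [← himage, sum_image hbij.1.injOn, ← sum_sub_distrib, hdisp, eq_comm] at hshift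
  have hn' : (n : ℤ) ≠ 0 := by omega
  exact sub_eq_zero.mp ((mul_eq_zero.mp hshift).resolve_left hn')

lemma isDecomposableAffine_of_mapsTo {n : ℕ} (hn : 0 < n) {ω : ℤ → ℤ} {s : ℤ}
    (hper : ∀ i, ω (i + n) = ω i + n)
    (hmaps : Set.MapsTo ω (Set.Ioc s (s + n)) (Set.Ioc s (s + n)))
    (hinj : Set.InjOn ω (Set.Ioc s (s + n))) : IsDecomposableAffine ω := by
  have hwin {i : ℤ} (hi : i ∈ Set.Ioc 0 (n : ℤ)) : i + s ∈ Set.Ioc s (s + n) :=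
    ⟨by linarith [hi.1], by linarith [hi.2]⟩
  obtain ⟨π, hπ⟩ := exists_eq_infiniteSum hn (g := shiftPerm (-s) ω)
    (fun i => by simp only [shiftPerm, sub_neg_eq_add, add_right_comm i, hper]; ring)
    (fun i hi => by
      have := hmaps (hwin hi)
      simp only [shiftPerm, sub_neg_eq_add, Set.mem_Ioc] at this ⊢
      constructor <;> linarith [this.1, this.2])
    (fun i hi j hj hij => by
      simp only [shiftPerm, sub_neg_eq_add, add_left_inj] at hij
      simpa using hinj (hwin hi) (hwin hj) hij)
  refine ⟨s, n, hn, π, ?_⟩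
  rw [← hπ, shiftPerm_shiftPerm, add_neg_cancel, shiftPerm_zero]

lemma HasCut.isDecomposableAffine {n : ℕ} (hn : 0 < n) {ω : ℤ → ℤ} (hω : IsAffinePerm n ω)
    {s : ℤ} (hs : HasCut ω s) : IsDecomposableAffine ω := by
  obtain ⟨t, ht⟩ := hs.exists_image_Iic_eq hω.1.2
  have hwin := image_Ioc_eq_of_image_Iic_eq hω.2.1 hω.1.1 ht
  obtain rfl := hω.eq_of_image_Ioc_eq hn hwin
  exact isDecomposableAffine_of_mapsTo hn hω.2.1 (hwin ▸ Set.mapsTo_image ω _) hω.1.1.injOn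

/-- an affine permutation is decomposable iff its inversion graph
is not connected. -/
theorem stmt10 (n : ℕ) (hn : 1 ≤ n) (ω : ℤ → ℤ) (hω : IsAffinePerm n ω) :
    IsDecomposableAffine ω ↔ ¬ (invGraph ω).Connected := by
  refine ⟨fun hd => ?_, fun hnc => ?_⟩
  · obtain ⟨s, hs⟩ := hd.exists_hasCut
    exact hs.not_connected
  · obtain ⟨s, hs⟩ : ∃ s, HasCut ω s := by
      by_contra! h
      exact hnc (invGraph_connected_of_forall_not_hasCut hω.1.1 h)
    exact hs.isDecomposableAffine hn hω
end

section
/- Let ω : ℤ → ℤ be a bijection whose inversion graph G(ω) is a doubly infinite path. Then ω is order-isomorphic to 𝒪 or to Σ¹𝒪; that is, there exist strictly increasing bijections u, v : ℤ → ℤ such that either ω(u(i)) = v(𝒪(i)) for all i ∈ ℤ, or ω(u(i)) = v((Σ¹𝒪)(i)) for all i ∈ ℤ. -/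
open Function

section OrderIso

variable {α β γ : Type*} [LinearOrder α] [LinearOrder β] [LinearOrder γ]

theorem lt_iff_lt_of_inversions_iff {ω : α → β} {τ : α → γ} (hω : Injective ω)
    (hτ : Injective τ) (h : ∀ i j, i < j → (ω j < ω i ↔ τ j < τ i)) (i j : α) :
    ω i < ω j ↔ τ i < τ j := by
  rcases lt_trichotomy i j with hij | rfl | hji
  · rw [← not_le, (hω.ne hij.ne').le_iff_lt, h i j hij, ← (hτ.ne hij.ne').le_iff_lt, not_le]
  · simp
  · exact h j i hji

theorem exists_strictMono_comp_eq_of_inversions_iff {ω : α → β} {τ : α → γ} (hω : Bijective ω)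
    (hτ : Bijective τ) (h : ∀ i j, i < j → (ω j < ω i ↔ τ j < τ i)) :
    ∃ (u : α → α) (v : γ → β), StrictMono u ∧ StrictMono v ∧
      Bijective u ∧ Bijective v ∧ ∀ i, ω (u i) = v (τ i) := by
  set e := Equiv.ofBijective τ hτ
  refine ⟨id, ω ∘ e.symm, strictMono_id, fun a b hab => ?_, bijective_id,
    hω.comp e.symm.bijective, fun i => by simp [e]⟩
  rw [comp_apply, comp_apply, lt_iff_lt_of_inversions_iff hω.1 hτ.1 h]
  rwa [Equiv.ofBijective_apply_symm_apply τ, Equiv.ofBijective_apply_symm_apply τ]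

end OrderIso

theorem Int.iff_odd_or_iff_even_of_add_one_iff_not {p : ℤ → Prop}
    (hp : ∀ i, p (i + 1) ↔ ¬ p i) : (∀ i, p i ↔ Odd i) ∨ (∀ i, p i ↔ Even i) := by
  have key : ∀ i, p i ↔ (Even i ↔ p 0) := by
    intro i
    induction i using Int.induction_on with
    | zero => simp
    | succ k ih => rw [hp, ih, Int.even_add_one]; tauto
    | pred k ih =>
      have hk := hp (-(k : ℤ) - 1)
      rw [sub_add_cancel] at hk
      rw [ih, Int.even_sub_one] at *
      tauto
  by_cases h0 : p 0
  · exact .inr fun i => by rw [key]; tauto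
  · exact .inl fun i => by rw [key, ← Int.not_even_iff_odd]; tauto

namespace SimpleGraph

variable {V : Type*}

def IsIntPath (G : SimpleGraph V) : Prop :=
  ∃ h : ℤ → V, Bijective h ∧ ∀ i j, G.Adj (h i) (h j) ↔ |i - j| = 1

namespace IsIntPath

variable {G : SimpleGraph V}

private theorem adj_iff {h : ℤ → V} (hadj : ∀ i j, G.Adj (h i) (h j) ↔ |i - j| = 1) (i j : ℤ) :
    G.Adj (h i) (h j) ↔ i = j + 1 ∨ j = i + 1 := by
  rw [hadj, abs_eq zero_le_one]
  omega

theorem exists_adj_iff (hG : G.IsIntPath) (v : V) :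
    ∃ a b, a ≠ b ∧ ∀ w, G.Adj v w ↔ w = a ∨ w = b := by
  obtain ⟨h, ⟨hinj, hsurj⟩, hadj⟩ := hG
  obtain ⟨k, rfl⟩ := hsurj v
  refine ⟨h (k - 1), h (k + 1), fun e => by have := hinj e; omega, fun w => ?_⟩
  obtain ⟨m, rfl⟩ := hsurj w
  rw [adj_iff hadj, hinj.eq_iff, hinj.eq_iff]
  omega

theorem not_adj_of_adj_of_adj (hG : G.IsIntPath) {a b c : V} (hab : G.Adj a b)
    (hbc : G.Adj b c) : ¬ G.Adj a c := by
  obtain ⟨h, ⟨-, hsurj⟩, hadj⟩ := hG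
  obtain ⟨x, rfl⟩ := hsurj a
  obtain ⟨y, rfl⟩ := hsurj b
  obtain ⟨z, rfl⟩ := hsurj c
  rw [adj_iff hadj] at hab hbc ⊢
  omega

theorem eq_of_adj_of_adj (hG : G.IsIntPath) {x y a b : V} (hxy : x ≠ y) (hxa : G.Adj x a)
    (hxb : G.Adj x b) (hya : G.Adj y a) (hyb : G.Adj y b) : a = b := by
  obtain ⟨h, ⟨-, hsurj⟩, hadj⟩ := hG
  obtain ⟨p, rfl⟩ := hsurj x
  obtain ⟨q, rfl⟩ := hsurj y
  obtain ⟨r, rfl⟩ := hsurj a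
  obtain ⟨s, rfl⟩ := hsurj b
  rw [adj_iff hadj] at hxa hxb hya hyb
  have : p ≠ q := fun e => hxy (congrArg h e)
  congr 1
  omega

end IsIntPath

end SimpleGraph

def StartsInversion (ω : ℤ → ℤ) (i : ℤ) : Prop := ∃ j, i < j ∧ ω j < ω i

section InversionPath

variable {ω : ℤ → ℤ} {i j : ℤ}

theorem lt_of_not_startsInversion (hω : Injective ω) (hi : ¬ StartsInversion ω i)
    (hij : i < j) : ω i < ω j :=
  (hω.ne hij.ne).lt_of_le (not_lt.1 fun h => hi ⟨j, hij, h⟩)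

theorem lt_of_startsInversion (hω : Injective ω) (hG : (invGraph ω).IsIntPath)
    (hi : StartsInversion ω i) (hji : j < i) : ω j < ω i := by
  obtain ⟨k, hik, hki⟩ := hi
  refine (hω.ne hji.ne).lt_of_le (not_lt.1 fun hij => ?_)
  exact hG.not_adj_of_adj_of_adj (.inl ⟨hji, hij⟩) (.inl ⟨hik, hki⟩)
    (.inl ⟨hji.trans hik, hki.trans hij⟩)

theorem exists_lt_of_not_startsInversion (hG : (invGraph ω).IsIntPath)
    (hi : ¬ StartsInversion ω i) : ∃ j < i, ω i < ω j := by
  obtain ⟨a, _, -, ha⟩ := hG.exists_adj_iff i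
  rcases (ha a).2 (.inl rfl) with ⟨hia, hai⟩ | hai
  · exact absurd ⟨a, hia, hai⟩ hi
  · exact ⟨a, hai⟩

theorem adj_add_one_of_startsInversion (hω : Injective ω) (hG : (invGraph ω).IsIntPath)
    (hi : StartsInversion ω i) (hi' : StartsInversion ω (i + 1)) {a : ℤ}
    (ha : (invGraph ω).Adj i a) : (invGraph ω).Adj (i + 1) a := by
  have hlt : ω i < ω (i + 1) := lt_of_startsInversion hω hG hi' (lt_add_one i)
  rcases ha with ⟨hia, hai⟩ | ⟨hai, hia⟩
  · have : a ≠ i + 1 := by rintro rfl; exact hai.asymm hlt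
    exact .inl ⟨by omega, hai.trans hlt⟩
  · exact absurd (lt_of_startsInversion hω hG hi hai) hia.asymm

theorem adj_of_adj_add_one_of_not_startsInversion (hω : Injective ω)
    (hi : ¬ StartsInversion ω i) (hi' : ¬ StartsInversion ω (i + 1)) {a : ℤ}
    (ha : (invGraph ω).Adj (i + 1) a) : (invGraph ω).Adj i a := by
  have hlt : ω i < ω (i + 1) := lt_of_not_startsInversion hω hi (lt_add_one i)
  rcases ha with ⟨hia, hai⟩ | ⟨hai, hia⟩
  · exact absurd ⟨a, hia, hai⟩ hi'
  · have : a ≠ i := by rintro rfl; exact hia.asymm hlt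
    exact .inr ⟨by omega, hlt.trans hia⟩

theorem startsInversion_add_one_iff (hω : Injective ω) (hG : (invGraph ω).IsIntPath) (i : ℤ) :
    StartsInversion ω (i + 1) ↔ ¬ StartsInversion ω i := by
  refine ⟨fun hi' hi => ?_, fun hi => by_contra fun hi' => ?_⟩
  · obtain ⟨a, b, hab, hadj⟩ := hG.exists_adj_iff i
    have hia := (hadj a).2 (.inl rfl)
    have hib := (hadj b).2 (.inr rfl)
    exact hab (hG.eq_of_adj_of_adj (lt_add_one i).ne hia hib
      (adj_add_one_of_startsInversion hω hG hi hi' hia)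
      (adj_add_one_of_startsInversion hω hG hi hi' hib))
  · obtain ⟨a, b, hab, hadj⟩ := hG.exists_adj_iff (i + 1)
    have hia := (hadj a).2 (.inl rfl)
    have hib := (hadj b).2 (.inr rfl)
    exact hab (hG.eq_of_adj_of_adj (lt_add_one i).ne
      (adj_of_adj_add_one_of_not_startsInversion hω hi hi' hia)
      (adj_of_adj_add_one_of_not_startsInversion hω hi hi' hib) hia hib)

theorem lt_add_one_of_startsInversion (hω : Injective ω) (hG : (invGraph ω).IsIntPath)
    (hi : StartsInversion ω i) : ω (i + 1) < ω i := by
  have hi' : ¬ StartsInversion ω (i + 1) := fun h => (startsInversion_add_one_iff hω hG i).1 h hi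
  obtain ⟨k, hk, hlt⟩ := exists_lt_of_not_startsInversion hG hi'
  rcases (Int.lt_add_one_iff.1 hk).lt_or_eq with hk | rfl
  · exact hlt.trans (lt_of_startsInversion hω hG hi hk)
  · exact hlt

theorem lt_add_three_of_startsInversion (hω : Injective ω) (hG : (invGraph ω).IsIntPath)
    (hi : StartsInversion ω i) : ω (i + 3) < ω i := by
  have halt := startsInversion_add_one_iff hω hG
  have hi2 : StartsInversion ω (i + 2) := by
    rw [show i + 2 = i + 1 + 1 by ring, halt, halt, not_not]; exact hi
  have h32 : ω (i + 3) < ω (i + 2) := by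
    simpa [add_assoc] using lt_add_one_of_startsInversion hω hG hi2
  have hi3 : ¬ StartsInversion ω (i + 3) := by
    rw [show i + 3 = i + 2 + 1 by ring, halt, not_not]; exact hi2
  obtain ⟨a, b, hab, hadj⟩ := hG.exists_adj_iff (i + 3)
  -- `i + 3` ends a second inversion, with some `m ≤ i + 1`, and every such `m` has `ω m ≤ ω i`.
  obtain ⟨m, hm2, hm⟩ : ∃ m, m ≠ i + 2 ∧ (invGraph ω).Adj (i + 3) m := by
    rcases (hadj (i + 2)).1 (.inr ⟨by omega, h32⟩) with rfl | rfl
    · exact ⟨b, hab.symm, (hadj b).2 (.inr rfl)⟩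
    · exact ⟨a, hab, (hadj a).2 (.inl rfl)⟩
  rcases hm with ⟨him, hmi⟩ | ⟨hmi, him⟩
  · exact absurd ⟨m, him, hmi⟩ hi3
  rcases lt_trichotomy m i with hm0 | rfl | hm0
  · exact him.trans (lt_of_startsInversion hω hG hi hm0)
  · exact him
  · obtain rfl : m = i + 1 := by omega
    exact him.trans (lt_add_one_of_startsInversion hω hG hi)

theorem lt_iff_startsInversion (hω : Injective ω) (hG : (invGraph ω).IsIntPath) (hij : i < j) :
    ω j < ω i ↔ StartsInversion ω i ∧ (j = i + 1 ∨ j = i + 3) := by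
  refine ⟨fun hji => ⟨⟨j, hij, hji⟩, ?_⟩, ?_⟩
  · obtain ⟨a, b, -, hadj⟩ := hG.exists_adj_iff i
    have h1 := (hadj _).1 (.inl ⟨by omega, lt_add_one_of_startsInversion hω hG ⟨j, hij, hji⟩⟩)
    have h3 := (hadj _).1 (.inl ⟨by omega, lt_add_three_of_startsInversion hω hG ⟨j, hij, hji⟩⟩)
    have hj := (hadj j).1 (.inl ⟨hij, hji⟩)
    omega
  · rintro ⟨hi, rfl | rfl⟩
    · exact lt_add_one_of_startsInversion hω hG hi
    · exact lt_add_three_of_startsInversion hω hG hi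

end InversionPath

theorem shiftPerm_bijective {σ : ℤ → ℤ} (hσ : Bijective σ) (r : ℤ) :
    Bijective (shiftPerm r σ) :=
  (Equiv.addRight r).bijective.comp (hσ.comp (Equiv.subRight r).bijective)

theorem oscillO_bijective : Bijective oscillO := by
  refine bijective_iff_has_inverse.2 ⟨fun i => if Odd i then i - 2 else i + 2, ?_, ?_⟩ <;>
  · intro i
    simp only [oscillO, Int.odd_iff]
    split_ifs <;> omega

theorem oscillO_lt_iff {i j : ℤ} (hij : i < j) :
    oscillO j < oscillO i ↔ Odd i ∧ (j = i + 1 ∨ j = i + 3) := by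
  simp only [oscillO, Int.odd_iff]
  split_ifs <;> omega

theorem shiftPerm_one_oscillO_lt_iff {i j : ℤ} (hij : i < j) :
    shiftPerm 1 oscillO j < shiftPerm 1 oscillO i ↔ Even i ∧ (j = i + 1 ∨ j = i + 3) := by
  simp only [shiftPerm, add_lt_add_iff_right]
  rw [oscillO_lt_iff (by omega), odd_sub_one]
  exact and_congr_right' (by omega)

/-- a bijection `ω : ℤ → ℤ` whose inversion graph is a doubly infinite
path is order-isomorphic to `𝒪` or to `Σ¹𝒪`. -/
theorem stmt11 (ω : ℤ → ℤ) (hbij : Function.Bijective ω)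
    (hpath : ∃ h : ℤ → ℤ, Function.Bijective h ∧
      ∀ i j : ℤ, (invGraph ω).Adj (h i) (h j) ↔ |i - j| = 1) :
    ∃ u v : ℤ → ℤ, StrictMono u ∧ StrictMono v ∧
      Function.Bijective u ∧ Function.Bijective v ∧
      ((∀ i : ℤ, ω (u i) = v (oscillO i)) ∨
        (∀ i : ℤ, ω (u i) = v (shiftPerm 1 oscillO i))) := by
  have hG : (invGraph ω).IsIntPath := hpath
  rcases Int.iff_odd_or_iff_even_of_add_one_iff_not (startsInversion_add_one_iff hbij.1 hG)
    with hodd | heven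
  · obtain ⟨u, v, hu, hv, hub, hvb, h⟩ :=
      exists_strictMono_comp_eq_of_inversions_iff hbij oscillO_bijective fun i j hij => by
        rw [lt_iff_startsInversion hbij.1 hG hij, hodd, oscillO_lt_iff hij]
    exact ⟨u, v, hu, hv, hub, hvb, .inl h⟩
  · obtain ⟨u, v, hu, hv, hub, hvb, h⟩ :=
      exists_strictMono_comp_eq_of_inversions_iff hbij (shiftPerm_bijective oscillO_bijective 1)
        fun i j hij => by
          rw [lt_iff_startsInversion hbij.1 hG hij, heven, shiftPerm_one_oscillO_lt_iff hij]
    exact ⟨u, v, hu, hv, hub, hvb, .inr h⟩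
end

section
/- Let ω be an affine permutation whose inversion graph G(ω) is connected. Then G(ω) has an induced subgraph that is a doubly infinite path; that is, there exists an injective function h : ℤ → ℤ such that for all i, j ∈ ℤ, h(i) and h(j) are adjacent in G(ω) if and only if |i−j| = 1. -/
namespace SimpleGraph

variable {V : Type*} {G : SimpleGraph V}

namespace Walk

variable {u v : V}

theorem dist_getVert_le_sub (w : G.Walk u v) {a b : ℕ} (hab : a ≤ b) :
    G.dist (w.getVert a) (w.getVert b) ≤ b - a := by
  have h := (dist_le ((w.drop a).take (b - a))).trans_eq (take_length _ _)
  rw [drop_getVert, Nat.add_sub_cancel' hab] at h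
  exact h.trans inf_le_left

theorem dist_getVert_eq_sub_of_length_eq_dist (w : G.Walk u v) (hw : w.length = G.dist u v)
    {a b : ℕ} (hab : a ≤ b) (hb : b ≤ w.length) :
    G.dist (w.getVert a) (w.getVert b) = b - a := by
  have hua := w.dist_getVert_le_sub (Nat.zero_le a)
  have hbv := w.dist_getVert_le_sub hb
  have hab' := w.dist_getVert_le_sub hab
  rw [getVert_zero] at hua
  rw [getVert_length] at hbv
  have := (w.drop a).reachable.dist_triangle_right u
  have := (w.drop b).reachable.dist_triangle_right (w.getVert a)
  omega

end Walk

def IsGeodesicOn (G : SimpleGraph V) (s : Set ℤ) (f : ℤ → V) : Prop :=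
  ∀ i ∈ s, ∀ j ∈ s, (G.dist (f i) (f j) : ℤ) = |i - j|

theorem IsGeodesicOn.injective {f : ℤ → V} (hf : G.IsGeodesicOn Set.univ f) :
    Function.Injective f := by
  intro i j hij
  have h := hf i trivial j trivial
  rw [hij, dist_self, Nat.cast_zero, eq_comm, abs_eq_zero, sub_eq_zero] at h
  exact h

theorem IsGeodesicOn.adj_iff {f : ℤ → V} (hf : G.IsGeodesicOn Set.univ f) (i j : ℤ) :
    G.Adj (f i) (f j) ↔ |i - j| = 1 := by
  rw [← dist_eq_one_iff_adj, ← hf i trivial j trivial]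
  norm_cast

theorem Walk.isGeodesicOn_getVert {u v : V} (w : G.Walk u v) (hw : w.length = G.dist u v) :
    G.IsGeodesicOn (Set.Icc 0 w.length) fun k => w.getVert k.toNat := by
  intro i hi j hj
  rw [Set.mem_Icc] at hi hj
  rcases le_total i j with hij | hji
  · rw [w.dist_getVert_eq_sub_of_length_eq_dist hw (by omega : i.toNat ≤ j.toNat) (by omega),
      abs_sub_comm, abs_of_nonneg (by omega)]
    omega
  · rw [dist_comm, w.dist_getVert_eq_sub_of_length_eq_dist hw (by omega : j.toNat ≤ i.toNat)
      (by omega), abs_of_nonneg (by omega)]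
    omega

section GeodesicWindow

variable (G) (S : Set V)

abbrev geodesicWindow (R : ℕ) : Type _ :=
  {f : Set.Icc (-(R : ℤ)) R → V //
    f ⟨0, by simp⟩ ∈ S ∧ ∀ i j, (G.dist (f i) (f j) : ℤ) = |(i : ℤ) - j|}

variable {G S}

def geodesicWindow.restrict {R R' : ℕ} (h : R' ≤ R) (f : geodesicWindow G S R) :
    geodesicWindow G S R' :=
  ⟨f.1 ∘ Set.inclusion (Set.Icc_subset_Icc (by omega) (by omega)), f.2.1, fun i j => f.2.2 _ _⟩

theorem finite_geodesicWindow (hS : ∀ r : ℕ, {v | ∃ s ∈ S, G.dist s v ≤ r}.Finite) (R : ℕ) :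
    Finite (geodesicWindow G S R) := by
  have := (hS R).to_subtype
  refine Finite.of_injective (β := Set.Icc (-(R : ℤ)) R → {v | ∃ s ∈ S, G.dist s v ≤ R})
    (fun f i => ⟨f.1 i, f.1 ⟨0, by simp⟩, f.2.1, ?_⟩) fun f g hfg => ?_
  · have hdist := f.2.2 ⟨0, by simp⟩ i
    have hi := i.2
    rw [Set.mem_Icc] at hi
    rw [zero_sub, abs_neg] at hdist
    rw [← Nat.cast_le (α := ℤ), hdist, abs_le]
    exact ⟨hi.1, hi.2⟩
  · ext1; funext i
    exact congrArg Subtype.val (congrFun hfg i)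

theorem exists_isGeodesicOn_univ_of_forall_isGeodesicOn_Icc
    (hS : ∀ r : ℕ, {v | ∃ s ∈ S, G.dist s v ≤ r}.Finite)
    (hwin : ∀ R : ℕ, ∃ f : ℤ → V, f 0 ∈ S ∧ G.IsGeodesicOn (Set.Icc (-(R : ℤ)) R) f) :
    ∃ f : ℤ → V, G.IsGeodesicOn Set.univ f := by
  have := finite_geodesicWindow hS
  have (R : ℕ) : Nonempty (geodesicWindow G S R) := by
    obtain ⟨f, hf0, hf⟩ := hwin R
    exact ⟨fun i => f i, hf0, fun i j => hf i i.2 j j.2⟩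
  obtain ⟨g, hg⟩ := exists_seq_forall_proj_of_forall_finite
    (fun h => geodesicWindow.restrict h) (fun _ _ => rfl) (fun _ _ _ _ _ _ => rfl)
    fun i _ => Set.toFinite (α := geodesicWindow G S (i + 1)) _
  have hmem (i : ℤ) {R : ℕ} (hi : i.natAbs ≤ R) : i ∈ Set.Icc (-(R : ℤ)) R := by
    rw [Set.mem_Icc]; omega
  have hcompat (i : ℤ) {R R' : ℕ} (hi : i.natAbs ≤ R) (hR : R ≤ R') :
      (g R).1 ⟨i, hmem i hi⟩ = (g R').1 ⟨i, hmem i (hi.trans hR)⟩ := by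
    rw [← hg hR]; rfl
  refine ⟨fun i => (g i.natAbs).1 ⟨i, hmem i le_rfl⟩, fun i _ j _ => ?_⟩
  dsimp only
  rw [hcompat i le_rfl (le_max_left i.natAbs j.natAbs),
    hcompat j le_rfl (le_max_right i.natAbs j.natAbs)]
  exact (g _).2.2 _ _

end GeodesicWindow

section IntGraph

variable {G : SimpleGraph ℤ} {B : ℤ}

theorem Walk.abs_sub_le_mul_length (hB : ∀ i j, G.Adj i j → |i - j| ≤ B) {u v : ℤ}
    (w : G.Walk u v) : |u - v| ≤ B * w.length := by
  induction w with
  | nil => simp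
  | @cons u x v h p ih =>
    rw [length_cons, Nat.cast_succ, mul_add_one]
    linarith [abs_sub_le u x v, hB u x h]

theorem Reachable.abs_sub_le_mul_dist (hB : ∀ i j, G.Adj i j → |i - j| ≤ B) {u v : ℤ}
    (huv : G.Reachable u v) : |u - v| ≤ B * G.dist u v := by
  obtain ⟨w, hw⟩ := huv.exists_walk_length_eq_dist
  exact hw ▸ w.abs_sub_le_mul_length hB

theorem Walk.exists_getVert_mem_Ioc (hB : ∀ i j, G.Adj i j → |i - j| ≤ B) {u v : ℤ}
    (w : G.Walk u v) {c : ℤ} (hu : u ≤ c) (hv : c < v) :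
    ∃ t ≤ w.length, w.getVert t ∈ Set.Ioc c (c + B) := by
  induction w with
  | nil => omega
  | @cons u x v h p ih =>
    by_cases hx : x ≤ c
    · obtain ⟨t, ht, hmem⟩ := ih hx hv
      exact ⟨t + 1, by rw [length_cons]; omega, hmem⟩
    · have := abs_le.mp (hB u x h)
      exact ⟨0 + 1, by rw [length_cons]; omega, by
        rw [getVert_cons_succ, getVert_zero, Set.mem_Ioc]; omega⟩

theorem Connected.finite_setOf_exists_dist_le (hconn : G.Connected)
    (hB : ∀ i j, G.Adj i j → |i - j| ≤ B) (r : ℕ) :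
    {v | ∃ s ∈ Set.Ioc 0 B, G.dist s v ≤ r}.Finite := by
  refine (Set.finite_Icc (-(B * r)) (B + B * r)).subset ?_
  rintro v ⟨s, ⟨hs0, hsB⟩, hsv⟩
  have hsv' : B * G.dist s v ≤ B * r :=
    mul_le_mul_of_nonneg_left (by exact_mod_cast hsv) (by omega)
  have := abs_le.mp (((hconn.preconnected s v).abs_sub_le_mul_dist hB).trans hsv')
  rw [Set.mem_Icc]
  omega

theorem Connected.exists_isGeodesicOn_Icc (hconn : G.Connected)
    (hB : ∀ i j, G.Adj i j → |i - j| ≤ B) (R : ℕ) :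
    ∃ f : ℤ → ℤ, f 0 ∈ Set.Ioc 0 B ∧ G.IsGeodesicOn (Set.Icc (-(R : ℤ)) R) f := by
  have hBpos : 0 < B := by
    obtain ⟨t, -, ht⟩ := (hconn.preconnected 0 1).some.exists_getVert_mem_Ioc hB le_rfl one_pos
    exact ht.1.trans_le (by simpa using ht.2)
  set K := B * (R + 1) with hKdef
  obtain ⟨w, hw⟩ := hconn.exists_walk_length_eq_dist (-K) K
  have hK : 0 < K := by positivity
  obtain ⟨t, htw, ht0, htB⟩ := w.exists_getVert_mem_Ioc hB (c := 0) (by omega) hK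
  have hstart := (w.take t).abs_sub_le_mul_length hB
  have hend := (w.drop t).abs_sub_le_mul_length hB
  rw [Walk.take_length, min_eq_left htw] at hstart
  rw [Walk.drop_length, Nat.cast_sub htw] at hend
  have hRt : (R : ℤ) ≤ t := by
    have : B * (R + 1) < B * t := by linarith [(abs_le.mp hstart).1]
    have := lt_of_mul_lt_mul_left this hBpos.le
    omega
  have hRend : (R : ℤ) ≤ w.length - t := by
    have : B * R ≤ B * (w.length - t) := by linarith [(abs_le.mp hend).1]
    exact le_of_mul_le_mul_left this hBpos
  refine ⟨fun i => w.getVert (t + i).toNat, by simpa using ⟨ht0, (zero_add B).le.trans' htB⟩,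
    fun i hi j hj => ?_⟩
  rw [Set.mem_Icc] at hi hj
  have := w.isGeodesicOn_getVert hw (t + i) (by rw [Set.mem_Icc]; omega) (t + j)
    (by rw [Set.mem_Icc]; omega)
  rwa [add_sub_add_left_eq_sub] at this

theorem Connected.exists_isGeodesicOn_univ (hconn : G.Connected)
    (hB : ∀ i j, G.Adj i j → |i - j| ≤ B) : ∃ f : ℤ → ℤ, G.IsGeodesicOn Set.univ f :=
  exists_isGeodesicOn_univ_of_forall_isGeodesicOn_Icc (hconn.finite_setOf_exists_dist_le hB)
    (hconn.exists_isGeodesicOn_Icc hB)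

end IntGraph

end SimpleGraph

theorem Function.Periodic.bddAbove_range {α : Type*} [Preorder α] [IsDirectedOrder α]
    [Nonempty α] {f : ℤ → α} {c : ℤ} (hf : Function.Periodic f c) (hc : 0 < c) :
    BddAbove (Set.range f) := by
  refine ((Set.finite_Ico 0 c).image f).bddAbove.mono ?_
  rintro _ ⟨i, rfl⟩
  obtain ⟨j, hj, hij⟩ := hf.exists_mem_Ico₀ hc i
  exact ⟨j, hj, hij.symm⟩

theorem invGraph_adj_abs_sub_le {ω : ℤ → ℤ} {M : ℤ} (hM : ∀ i, |ω i - i| ≤ M) {i j : ℤ}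
    (hij : (invGraph ω).Adj i j) : |i - j| ≤ 2 * M := by
  have hi := abs_le.mp (hM i)
  have hj := abs_le.mp (hM j)
  rcases hij with ⟨hlt, hinv⟩ | ⟨hlt, hinv⟩ <;> rw [abs_le] <;> constructor <;> omega

/-- a connected affine permutation has an induced subgraph of its
inversion graph that is a doubly infinite path. -/
theorem stmt12 (n : ℕ) (hn : 1 ≤ n) (ω : ℤ → ℤ) (hω : IsAffinePerm n ω)
    (hconn : (invGraph ω).Connected) :
    ∃ h : ℤ → ℤ, Function.Injective h ∧
      ∀ i j : ℤ, (invGraph ω).Adj (h i) (h j) ↔ |i - j| = 1 := by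
  have hdisp : Function.Periodic (fun i => |ω i - i|) n := fun i => by
    simp only [hω.2.1, add_sub_add_right_eq_sub]
  obtain ⟨M, hM⟩ := hdisp.bddAbove_range (by omega)
  obtain ⟨h, hh⟩ := hconn.exists_isGeodesicOn_univ fun i j =>
    invGraph_adj_abs_sub_le fun k => hM ⟨k, rfl⟩
  exact ⟨h, hh.injective, hh.adj_iff⟩
end

section
/- For all integers n ≥ 0 and 0 ≤ k ≤ n: (a) the number of permutations of size n with exactly m fixed points and exactly k excedances equals binomial(n,m) · d(n−m, k); and (b) d(n,k) = ∑_{m=0}^{n−k} (−1)^m · binomial(n,m) · a(n−m, k), as an identity of integers. -/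
/-!
Restricting a permutation whose fixed-point set is `S` to the complement of `S` gives a
derangement of that complement, and every derangement of it arises this way from exactly one
permutation. An order isomorphism from the complement to `Fin (n - #S)` preserves excedances, so
the permutations with fixed-point set `S` and `k` excedances are counted by `d(n - #S, k)`;
summing over the `C(n, m)` sets `S` of size `m` gives (a). Summing (a) over `m` gives
`a(n, k) = ∑ᵢ C(n, i) d(i, k)`, and binomial inversion turns this into (b); the terms with
`m > n - k` vanish since a permutation of size `n - m < k` has fewer than `k` excedances.
-/

open Finset Equiv

theorem Nat.choose_mul_choose_sub_comm (n m i : ℕ) :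
    n.choose m * (n - m).choose i = n.choose i * (n - i).choose m := by
  have h₁ := Nat.choose_mul (n := n) (Nat.le_add_right m i)
  have h₂ := Nat.choose_mul (n := n) (Nat.le_add_left i m)
  simp only [Nat.add_sub_cancel, Nat.add_sub_cancel_left] at h₁ h₂
  rw [← h₁, ← h₂, Nat.choose_symm_add]

theorem binomial_inversion {R : Type*} [CommRing R] {f g : ℕ → R}
    (h : ∀ j, g j = ∑ i ∈ range (j + 1), (j.choose i : R) * f i) (n : ℕ) :
    f n = ∑ m ∈ range (n + 1), (-1) ^ m * (n.choose m : R) * g (n - m) := by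
  have hswap : ∀ m i, m ∈ range (n + 1) ∧ i ∈ range (n - m + 1) ↔
      m ∈ range (n - i + 1) ∧ i ∈ range (n + 1) := by
    intro m i; simp only [mem_range]; omega
  symm
  calc ∑ m ∈ range (n + 1), (-1) ^ m * (n.choose m : R) * g (n - m)
      = ∑ m ∈ range (n + 1), ∑ i ∈ range (n - m + 1),
          (-1) ^ m * ((n.choose m * (n - m).choose i : ℕ) : R) * f i := by
        refine sum_congr rfl fun m _ => ?_
        rw [h, mul_sum]
        refine sum_congr rfl fun i _ => ?_
        push_cast; ring
    _ = ∑ i ∈ range (n + 1), (n.choose i : R) * f i *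
          ∑ m ∈ range (n - i + 1), (-1) ^ m * ((n - i).choose m : R) := by
        rw [sum_comm' hswap]
        refine sum_congr rfl fun i _ => ?_
        rw [mul_sum]
        refine sum_congr rfl fun m _ => ?_
        rw [Nat.choose_mul_choose_sub_comm]
        push_cast; ring
    _ = f n := by
        have halt : ∀ j, ∑ m ∈ range (j + 1), (-1) ^ m * (j.choose m : R) =
            if j = 0 then 1 else 0 := fun j => by
          exact_mod_cast congrArg (Int.cast : ℤ → R) Int.alternating_sum_range_choose
        simp_rw [halt]
        rw [sum_eq_single_of_mem n (self_mem_range_succ n) fun i hi hin => ?_]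
        · simp
        · rw [if_neg (by simp only [mem_range] at hi; omega), mul_zero]

namespace Equiv.Perm

variable {α β : Type*} [LinearOrder α] [Fintype α] [LinearOrder β] [Fintype β]

def excedances (σ : Perm α) : Finset α := univ.filter fun a => a < σ a

@[simp]
theorem mem_excedances {σ : Perm α} {a : α} : a ∈ σ.excedances ↔ a < σ a := by
  simp [excedances]

theorem card_excedances_permCongr (e : α ≃o β) (σ : Perm α) :
    #(e.toEquiv.permCongr σ).excedances = #σ.excedances :=
  (card_equiv e.toEquiv fun a => by simp).symm

theorem card_excedances_ofSubtype {p : α → Prop} [DecidablePred p] (σ : Perm (Subtype p)) :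
    #(ofSubtype σ).excedances = #σ.excedances := by
  refine (card_nbij Subtype.val (fun a ha => ?_) Subtype.val_injective.injOn
    fun a ha => ?_).symm
  · simpa [ofSubtype_apply_coe] using ha
  · have hp : p a := by
      by_contra hp
      simp [ofSubtype_apply_of_not_mem σ hp] at ha
    exact ⟨⟨a, hp⟩, by simpa [ofSubtype_apply_of_mem σ hp, ← Subtype.coe_lt_coe] using ha, rfl⟩

end Equiv.Perm

section PermutationCounts

open Equiv.Perm

variable {α : Type*} [LinearOrder α] [Fintype α]

theorem natCard_derangements_excedances {c : ℕ} (h : Fintype.card α = c) (k : ℕ) :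
    Nat.card {σ : Perm α // σ ∈ derangements α ∧ #σ.excedances = k} = derangD c k := by
  set e := Fintype.orderIsoFinOfCardEq α h
  refine (Nat.card_congr (e.toEquiv.permCongr.subtypeEquiv fun π => and_congr ?_ ?_)).symm
  · exact e.toEquiv.forall_congr fun {i} => by simp
  · exact (card_excedances_permCongr e π).symm ▸ Iff.rfl

theorem natCard_fixedPoints_eq_and_excedances (S : Finset α) (k : ℕ) :
    Nat.card {π : Perm α // univ.filter (fun a => π a = a) = S ∧ #π.excedances = k} =
      derangD (Fintype.card α - #S) k := by
  rw [← natCard_derangements_excedances (α := {a // a ∉ S}) (by simp) k]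
  refine (Nat.card_congr ?_).symm
  calc _ ≃ {σ : derangements {a // a ∉ S} // #σ.1.excedances = k} :=
        (subtypeSubtypeEquivSubtypeInter _ _).symm
    _ ≃ {π : {f : Perm α // ∀ a, ¬ a ∉ S ↔ a ∈ Function.fixedPoints f} //
          #π.1.excedances = k} :=
        (derangements.subtypeEquiv _).subtypeEquiv fun σ => by
          rw [← card_excedances_ofSubtype σ.1]; rfl
    _ ≃ {π : Perm α //
          (∀ a, ¬ a ∉ S ↔ a ∈ Function.fixedPoints π) ∧ #π.excedances = k} :=
        subtypeSubtypeEquivSubtypeInter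
          (fun π : Perm α => ∀ a, ¬ a ∉ S ↔ a ∈ Function.fixedPoints π) (#·.excedances = k)
    _ ≃ _ := subtypeEquivRight fun π => and_congr_left' <| by
        simp [Finset.ext_iff, Function.IsFixedPt, iff_comm]

theorem natCard_card_fixedPoints_and_excedances (m k : ℕ) :
    Nat.card {π : Perm α // #(univ.filter fun a => π a = a) = m ∧ #π.excedances = k} =
      (Fintype.card α).choose m * derangD (Fintype.card α - m) k := by
  have hfiber : ∀ S ∈ powersetCard m (univ : Finset α),
      #{π ∈ (univ : Finset (Perm α)) |
          (#(univ.filter fun a => π a = a) = m ∧ #π.excedances = k) ∧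
            univ.filter (fun a => π a = a) = S} = derangD (Fintype.card α - m) k := by
    intro S hS
    rw [← mem_powersetCard_univ.mp hS, ← natCard_fixedPoints_eq_and_excedances,
      Nat.card_eq_fintype_card, Fintype.card_subtype]
    congr 1
    ext π
    simp only [mem_filter, mem_univ, true_and]
    exact ⟨fun ⟨⟨_, hk⟩, hS⟩ => ⟨hS, hk⟩, fun ⟨hS, hk⟩ => ⟨⟨hS ▸ rfl, hk⟩, hS⟩⟩
  rw [Nat.card_eq_fintype_card, Fintype.card_subtype,
    card_eq_sum_card_fiberwise (f := fun π => univ.filter fun a => π a = a)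
      (t := powersetCard m univ) fun π hπ => by simpa using (mem_filter.mp hπ).2.1]
  simp only [filter_filter]
  rw [sum_congr rfl hfiber, sum_const, card_powersetCard, card_univ, smul_eq_mul]

end PermutationCounts

theorem eulerianA_eq_sum_choose_mul_derangD (j k : ℕ) :
    eulerianA j k = ∑ i ∈ range (j + 1), j.choose i * derangD i k := by
  have hfiber : ∀ m ∈ range (j + 1),
      #{π ∈ (univ : Finset (Perm (Fin j))) | excCount π = k ∧ numFixedPoints π = m} =
        j.choose m * derangD (j - m) k := by
    intro m _
    have h := natCard_card_fixedPoints_and_excedances (α := Fin j) m k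
    rw [Fintype.card_fin, Nat.card_eq_fintype_card, Fintype.card_subtype] at h
    rw [← h]
    exact congrArg card (filter_congr fun π _ => and_comm)
  rw [eulerianA, Nat.card_eq_fintype_card, Fintype.card_subtype,
    card_eq_sum_card_fiberwise (f := numFixedPoints) (t := range (j + 1)) fun π _ =>
      mem_range.mpr (Nat.lt_succ_of_le ((card_filter_le _ _).trans_eq (card_fin j)))]
  simp only [filter_filter]
  rw [sum_congr rfl hfiber, ← sum_range_reflect]
  refine sum_congr rfl fun i hi => ?_
  have hij : i ≤ j := Nat.lt_succ_iff.mp (mem_range.mp hi)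
  rw [Nat.add_sub_cancel, Nat.sub_sub_self hij, Nat.choose_symm hij]

theorem derangD_eq_alternating_sum (n k : ℕ) :
    (derangD n k : ℤ) =
      ∑ m ∈ range (n + 1), (-1) ^ m * (n.choose m : ℤ) * eulerianA (n - m) k :=
  binomial_inversion (f := fun i => (derangD i k : ℤ)) (g := fun j => (eulerianA j k : ℤ))
    (fun j => by exact_mod_cast eulerianA_eq_sum_choose_mul_derangD j k) n

theorem eulerianA_eq_zero_of_lt {j k : ℕ} (h : j < k) : eulerianA j k = 0 := by
  refine Nat.card_eq_zero.mpr (Or.inl ⟨fun ⟨π, hπ⟩ => ?_⟩)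
  have : excCount π ≤ j := (card_filter_le _ _).trans_eq (card_fin j)
  omega

theorem stmt16_general (n k : ℕ) :
    (∀ m : ℕ,
      Nat.card {π : Equiv.Perm (Fin n) // numFixedPoints π = m ∧ excCount π = k} =
        Nat.choose n m * derangD (n - m) k) ∧
    ((derangD n k : ℤ) =
      ∑ m ∈ Finset.range (n - k + 1),
        (-1 : ℤ) ^ m * Nat.choose n m * eulerianA (n - m) k) := by
  refine ⟨fun m => (natCard_card_fixedPoints_and_excedances m k).trans
    (by rw [Fintype.card_fin]), ?_⟩
  rw [derangD_eq_alternating_sum]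
  refine (sum_subset (range_subset_range.mpr (by omega)) fun m hm hmk => ?_).symm
  rw [mem_range] at hm hmk
  rw [eulerianA_eq_zero_of_lt (by omega), Nat.cast_zero, mul_zero]

/-- (a) the number of permutations of size `n` with `m` fixed points and
`k` excedances is `C(n,m)·d(n−m,k)`; (b) `d(n,k) = ∑_{m=0}^{n−k} (−1)^m C(n,m) a(n−m,k)`. -/
theorem stmt16 (n k : ℕ) (hk : k ≤ n) :
    (∀ m : ℕ,
      Nat.card {π : Equiv.Perm (Fin n) // numFixedPoints π = m ∧ excCount π = k} =
        Nat.choose n m * derangD (n - m) k) ∧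
    ((derangD n k : ℤ) =
      ∑ m ∈ Finset.range (n - k + 1),
        (-1 : ℤ) ^ m * Nat.choose n m * eulerianA (n - m) k) :=
  stmt16_general n k
end

section
/- For every n ≥ 1, the number of bounded affine permutations of size n satisfies |S̃//_n| = ∑_{m=0}^n binomial(n,m) · ∑_{k=0}^m binomial(m,k) · d(m,k), and also |S̃//_n| = ∑_{m=0}^n binomial(n,m) · ∑_{k=0}^m binomial(m, n−k) · (−1)^{n−m} · a(m,k), the latter as an identity of integers. -/
/-!
An affine permutation `σ` of size `n` is determined by its window: `σ (r + 1) = t r * n + w r + 1`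
for a permutation `w` of `Fin n` and shifts `t : Fin n → ℤ` with `∑ t = 0`. Boundedness forces
`t r = 0` at fixed points of `w`, `t r ∈ {0, -1}` at excedances and `t r ∈ {0, 1}` at
anti-excedances. Writing `t r = [w r < r] - [r ∈ U]` with `U ⊆ supp w`, the zero-sum condition
becomes `#U = #{anti-excedances}`, so `w` contributes `choose #(supp w) (exc w)`. Grouping the `w`
by their support, an `m`-subset carrying a derangement with the same number of excedances, gives
the first formula.

For the second, `a(m,k) = ∑ⱼ C(m,j) d(j,k)` (group by the set of non-fixed points), and
`∑ₘ (-1)^(n-m) C(n,m) C(m,n-k) C(m,j) = C(n,j) C(j,k)`, a forward difference of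
`x ↦ C(x, n-k)`.
-/

open Finset Equiv

theorem abs_mul_add_lt_iff {n q d : ℤ} (hd : |d| < n) :
    |q * n + d| < n ↔ q = 0 ∨ (q = -1 ∧ 0 < d) ∨ (q = 1 ∧ d < 0) := by
  rw [abs_lt] at hd ⊢
  constructor
  · rintro ⟨h₁, h₂⟩
    have hq₁ : -1 ≤ q := by nlinarith
    have hq₂ : q ≤ 1 := by nlinarith
    interval_cases q <;> omega
  · rintro (rfl | ⟨rfl, _⟩ | ⟨rfl, _⟩) <;> omega

theorem sum_Icc_one_eq_sum_fin {M : Type*} [AddCommMonoid M] (n : ℕ) (f : ℤ → M) :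
    ∑ i ∈ Icc (1 : ℤ) n, f i = ∑ r : Fin n, f (r + 1) := by
  refine (sum_bij (fun (r : Fin n) _ => (r : ℤ) + 1) (fun r _ => ?_) (fun a _ b _ h => ?_)
    (fun i hi => ?_) fun _ _ => rfl).symm
  · simp only [mem_Icc]; omega
  · simp only [add_left_inj, Nat.cast_inj] at h; exact Fin.ext h
  · simp only [mem_Icc] at hi
    exact ⟨⟨(i - 1).toNat, by omega⟩, mem_univ _, by simp; omega⟩

theorem sum_range_succ_eq_of_le {M : Type*} [AddCommMonoid M] {m n : ℕ} (h : m ≤ n) {f : ℕ → M}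
    (hf : ∀ k, m < k → f k = 0) : ∑ k ∈ range (m + 1), f k = ∑ k ∈ range (n + 1), f k :=
  sum_subset (range_subset_range.2 (by omega)) fun k _ hk => hf k (by simp at hk; omega)

theorem IsAffinePerm.apply_add_mul {n : ℕ} {σ : ℤ → ℤ} (hσ : IsAffinePerm n σ) (i q : ℤ) :
    σ (i + q * n) = σ i + q * n := by
  induction q using Int.induction_on with
  | zero => simp
  | succ q ih => rw [add_mul, one_mul, ← add_assoc, hσ.2.1, ih]; ring
  | pred q ih =>
    have := hσ.2.1 (i + (-q - 1) * n)
    rw [show i + (-q - 1) * n + n = i + -q * n by ring, ih] at this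
    linarith

section shifts

variable {n : ℕ} (w : Perm (Fin n))

def IsAdmissibleShift (t : Fin n → ℤ) : Prop :=
  ∀ r, t r = 0 ∨ (t r = -1 ∧ r < w r) ∨ (t r = 1 ∧ w r < r)

def antiExcedances : Finset (Fin n) := univ.filter fun r => w r < r

theorem excCount_add_card_antiExcedances : excCount w + #(antiExcedances w) = #w.support := by
  rw [excCount, antiExcedances,
    ← card_union_of_disjoint (disjoint_filter.2 fun r _ h h' => lt_asymm h h')]
  congr 1
  ext r
  simp only [mem_union, mem_filter, mem_univ, true_and, Perm.mem_support, lt_or_lt_iff_ne,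
    ne_comm]

def shiftOfSubset (U : Finset (Fin n)) (r : Fin n) : ℤ :=
  (if w r < r then 1 else 0) - (if r ∈ U then 1 else 0)

theorem shiftOfSubset_injective : Function.Injective (shiftOfSubset w) := by
  intro U V h
  ext r
  have := congrFun h r
  simp only [shiftOfSubset, sub_right_inj] at this
  by_cases hU : r ∈ U <;> by_cases hV : r ∈ V <;> simp_all

theorem sum_shiftOfSubset (U : Finset (Fin n)) :
    ∑ r, shiftOfSubset w U r = #(antiExcedances w) - #U := by
  simp [shiftOfSubset, sum_sub_distrib, sum_boole, antiExcedances]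

theorem isAdmissibleShift_shiftOfSubset {U : Finset (Fin n)} (hU : U ⊆ w.support) :
    IsAdmissibleShift w (shiftOfSubset w U) := by
  intro r
  have hfix : w r = r → r ∉ U := fun h hr => Perm.mem_support.1 (hU hr) h
  rcases lt_trichotomy (w r) r with h | h | h <;> by_cases hr : r ∈ U <;>
    simp_all [shiftOfSubset, not_lt_of_gt]

theorem exists_shiftOfSubset {t : Fin n → ℤ} (ht : IsAdmissibleShift w t) :
    ∃ U ⊆ w.support, shiftOfSubset w U = t := by
  refine ⟨univ.filter fun r => t r ≠ if w r < r then 1 else 0, fun r hr => ?_, funext fun r => ?_⟩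
  · rw [Perm.mem_support]
    rintro hfix
    rcases ht r with h | ⟨-, h⟩ | ⟨-, h⟩ <;> simp_all
  · rcases ht r with h | ⟨h, hlt⟩ | ⟨h, hlt⟩
    · simp [shiftOfSubset, h]
    · simp [shiftOfSubset, h, hlt, not_lt_of_gt]
    · simp [shiftOfSubset, h, hlt]

noncomputable def subsetShiftEquiv :
    {U // U ∈ powersetCard #(antiExcedances w) w.support} ≃
      {t : Fin n → ℤ // IsAdmissibleShift w t ∧ ∑ r, t r = 0} :=
  Equiv.ofBijective
    (fun U => ⟨shiftOfSubset w U, isAdmissibleShift_shiftOfSubset w (mem_powersetCard.1 U.2).1,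
      by rw [sum_shiftOfSubset, (mem_powersetCard.1 U.2).2, sub_self]⟩)
    ⟨fun _ _ h => Subtype.ext (shiftOfSubset_injective w (congrArg Subtype.val h)), by
      rintro ⟨t, ht, hsum⟩
      obtain ⟨U, hU, rfl⟩ := exists_shiftOfSubset w ht
      rw [sum_shiftOfSubset, sub_eq_zero, Nat.cast_inj] at hsum
      exact ⟨⟨U, mem_powersetCard.2 ⟨hU, hsum.symm⟩⟩, rfl⟩⟩

end shifts

section window

variable {n : ℕ} [NeZero n]

variable (n) in
def blockEquiv : ℤ ≃ ℤ × Fin n := (Equiv.subRight 1).trans (Int.divModEquiv n)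

@[simp]
theorem blockEquiv_symm_apply (q : ℤ) (r : Fin n) :
    (blockEquiv n).symm (q, r) = q * n + r + 1 := by
  simp [blockEquiv]

theorem blockEquiv_natCast_add_one (r : Fin n) : blockEquiv n (r + 1) = (0, r) := by
  rw [← Equiv.eq_symm_apply, blockEquiv_symm_apply]; ring

theorem blockEquiv_symm_add_mul (q : ℤ) (r : Fin n) (p : ℤ) :
    (blockEquiv n).symm (q, r) + p * n = (blockEquiv n).symm (q + p, r) := by
  simp only [blockEquiv_symm_apply]; ring

/-- `(q, r) ↦ (q + t r, w r)` -/
def windowPerm (w : Perm (Fin n)) (t : Fin n → ℤ) : Perm (ℤ × Fin n) :=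
  (prodComm _ _).trans ((prodShear w fun r => Equiv.addRight (t r)).trans (prodComm _ _))

def ofWindow (w : Perm (Fin n)) (t : Fin n → ℤ) : Perm ℤ :=
  (blockEquiv n).trans ((windowPerm w t).trans (blockEquiv n).symm)

theorem ofWindow_blockEquiv_symm (w : Perm (Fin n)) (t : Fin n → ℤ) (q : ℤ) (r : Fin n) :
    ofWindow w t ((blockEquiv n).symm (q, r)) = (blockEquiv n).symm (q + t r, w r) := by
  simp only [ofWindow, trans_apply, apply_symm_apply]; rfl

theorem ofWindow_natCast_add_one (w : Perm (Fin n)) (t : Fin n → ℤ) (r : Fin n) :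
    ofWindow w t (r + 1) = t r * n + w r + 1 := by
  rw [← (blockEquiv n).symm_apply_apply (r + 1), blockEquiv_natCast_add_one,
    ofWindow_blockEquiv_symm, blockEquiv_symm_apply, zero_add]

theorem ofWindow_injective :
    Function.Injective fun p : Perm (Fin n) × (Fin n → ℤ) => ⇑(ofWindow p.1 p.2) := by
  rintro ⟨w, t⟩ ⟨w', t'⟩ h
  have key r : ((blockEquiv n).symm (t r, w r)) = (blockEquiv n).symm (t' r, w' r) := by
    simpa only [zero_add, ofWindow_blockEquiv_symm] using congrFun h ((blockEquiv n).symm (0, r))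
  simp only [EmbeddingLike.apply_eq_iff_eq, Prod.mk.injEq] at key
  exact Prod.ext (Equiv.ext fun r => (key r).2) (funext fun r => (key r).1)

theorem isAffinePerm_ofWindow_iff (w : Perm (Fin n)) (t : Fin n → ℤ) :
    IsAffinePerm n (ofWindow w t) ↔ ∑ r, t r = 0 := by
  have hperiodic (i : ℤ) : ofWindow w t (i + n) = ofWindow w t i + n := by
    obtain ⟨⟨q, r⟩, rfl⟩ := (blockEquiv n).symm.surjective i
    rw [← one_mul (n : ℤ), blockEquiv_symm_add_mul, ofWindow_blockEquiv_symm,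
      ofWindow_blockEquiv_symm, blockEquiv_symm_add_mul, add_right_comm]
  have hsum : ∑ i ∈ Icc (1 : ℤ) n, ofWindow w t i = (∑ r, t r) * n + ∑ i ∈ Icc (1 : ℤ) n, i := by
    simp only [sum_Icc_one_eq_sum_fin, ofWindow_natCast_add_one, sum_add_distrib, ← sum_mul,
      add_assoc]
    congr 2
    exact Equiv.sum_comp w fun r => (r : ℤ)
  simp only [IsAffinePerm, (ofWindow w t).bijective, hperiodic, implies_true, true_and, hsum,
    add_eq_right, mul_eq_zero, Nat.cast_eq_zero, NeZero.ne n, or_false]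

theorem bounded_ofWindow_iff (w : Perm (Fin n)) (t : Fin n → ℤ) :
    (∀ i, |ofWindow w t i - i| < n) ↔ IsAdmissibleShift w t := by
  have hdisp (q : ℤ) (r : Fin n) : ofWindow w t ((blockEquiv n).symm (q, r)) -
      (blockEquiv n).symm (q, r) = t r * n + ((w r : ℤ) - r) := by
    rw [ofWindow_blockEquiv_symm, blockEquiv_symm_apply, blockEquiv_symm_apply]; ring
  have hsmall (r : Fin n) : |(w r : ℤ) - r| < n := by
    rw [abs_lt]; have := (w r).2; have := r.2; omega
  rw [(blockEquiv n).forall_congr_left, Prod.forall]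
  simp only [hdisp, abs_mul_add_lt_iff (hsmall _), sub_pos, sub_neg, Nat.cast_lt, Fin.val_fin_lt]
  exact ⟨fun h r => h 0 r, fun h _ r => h r⟩

theorem IsAffinePerm.exists_eq_ofWindow {σ : ℤ → ℤ} (hσ : IsAffinePerm n σ) :
    ∃ (w : Perm (Fin n)) (t : Fin n → ℤ), σ = ofWindow w t := by
  set v : Fin n → ℤ × Fin n := fun r => blockEquiv n (σ (r + 1))
  have hσv (q : ℤ) (r : Fin n) :
      σ ((blockEquiv n).symm (q, r)) = (blockEquiv n).symm ((v r).1 + q, (v r).2) := by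
    rw [← blockEquiv_symm_add_mul (n := n), Prod.mk.eta, symm_apply_apply, ← hσ.apply_add_mul,
      blockEquiv_symm_apply]
    congr 1
    ring
  -- Two window values with the same residue differ by a multiple of `n`, which periodicity
  -- transfers to their positions.
  have hinj : Function.Injective fun r => (v r).2 := by
    intro a b hab
    have h : σ ((blockEquiv n).symm ((v a).1 - (v b).1, b)) = σ ((blockEquiv n).symm (0, a)) := by
      rw [hσv, hσv, add_zero, add_sub_cancel]
      exact congrArg _ (Prod.ext rfl hab.symm)
    exact (Prod.mk.inj ((blockEquiv n).symm.injective (hσ.1.1 h))).2.symm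
  refine ⟨Equiv.ofBijective _ hinj.bijective_of_finite, fun r => (v r).1, funext fun i => ?_⟩
  obtain ⟨⟨q, r⟩, rfl⟩ := (blockEquiv n).symm.surjective i
  rw [hσv, ofWindow_blockEquiv_symm, add_comm]
  rfl

noncomputable def windowEquiv :
    {p : Perm (Fin n) × (Fin n → ℤ) // IsAdmissibleShift p.1 p.2 ∧ ∑ r, p.2 r = 0} ≃
      {σ : ℤ → ℤ // IsBoundedAffinePerm n σ} :=
  Equiv.ofBijective
    (fun p => ⟨ofWindow p.1.1 p.1.2,
      (isAffinePerm_ofWindow_iff _ _).2 p.2.2, (bounded_ofWindow_iff _ _).2 p.2.1⟩)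
    ⟨fun _ _ h => Subtype.ext (ofWindow_injective (congrArg Subtype.val h)), by
      rintro ⟨σ, hσ, hbdd⟩
      obtain ⟨w, t, rfl⟩ := IsAffinePerm.exists_eq_ofWindow hσ
      exact ⟨⟨(w, t), (bounded_ofWindow_iff w t).1 hbdd, (isAffinePerm_ofWindow_iff w t).1 hσ⟩,
        rfl⟩⟩

theorem card_boundedAffinePerm_eq_sum_choose (n : ℕ) [NeZero n] :
    Nat.card {σ : ℤ → ℤ // IsBoundedAffinePerm n σ} =
      ∑ w : Perm (Fin n), (#w.support).choose (excCount w) := by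
  let e := ((windowEquiv (n := n)).symm.trans (subtypeProdEquivSigmaSubtype fun w t =>
    IsAdmissibleShift w t ∧ ∑ r, t r = 0)).trans
      (sigmaCongrRight fun w => (subsetShiftEquiv w).symm)
  rw [Nat.card_congr e, Nat.card_eq_fintype_card, Fintype.card_sigma]
  refine sum_congr rfl fun w _ => ?_
  rw [Fintype.card_coe, card_powersetCard,
    Nat.choose_symm_of_eq_add (excCount_add_card_antiExcedances w).symm]

end window

theorem Finset.exists_orderEmbOfFin_eq {α : Type*} [LinearOrder α] (s : Finset α) {x : α}
    (hx : x ∈ s) : ∃ j, s.orderEmbOfFin rfl j = x := by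
  rwa [← Set.mem_range, range_orderEmbOfFin]

section support

variable {n : ℕ} (F : Finset (Fin n))

/-- `δ` transported to `F` by the increasing enumeration of `F`, so that excedances are kept. -/
noncomputable def extendOnFinset (δ : Perm (Fin #F)) : Perm (Fin n) :=
  δ.extendDomain (F.orderIsoOfFin rfl).toEquiv

theorem extendOnFinset_apply_orderEmbOfFin (δ : Perm (Fin #F)) (j : Fin #F) :
    extendOnFinset F δ (F.orderEmbOfFin rfl j) = F.orderEmbOfFin rfl (δ j) :=
  Perm.extendDomain_apply_image _ _ _

theorem extendOnFinset_apply_of_notMem (δ : Perm (Fin #F)) {x : Fin n} (hx : x ∉ F) :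
    extendOnFinset F δ x = x :=
  Perm.extendDomain_apply_not_subtype _ _ hx

theorem excCount_extendOnFinset (δ : Perm (Fin #F)) :
    excCount (extendOnFinset F δ) = excCount δ := by
  refine (card_bij (fun j _ => F.orderEmbOfFin rfl j) (fun j hj => ?_)
    (fun a _ b _ h => (F.orderEmbOfFin rfl).injective h) (fun x hx => ?_)).symm
  · simpa [extendOnFinset_apply_orderEmbOfFin] using hj
  · simp only [mem_filter, mem_univ, true_and] at hx
    have hxF : x ∈ F := by
      by_contra hxF
      rw [extendOnFinset_apply_of_notMem F δ hxF] at hx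
      exact lt_irrefl x hx
    obtain ⟨j, rfl⟩ := F.exists_orderEmbOfFin_eq hxF
    rw [extendOnFinset_apply_orderEmbOfFin, OrderEmbedding.lt_iff_lt] at hx
    exact ⟨j, by simpa using hx, rfl⟩

theorem support_extendOnFinset {δ : Perm (Fin #F)} (hδ : ∀ i, δ i ≠ i) :
    (extendOnFinset F δ).support = F := by
  ext x
  rw [Perm.mem_support]
  by_cases hxF : x ∈ F
  · obtain ⟨j, rfl⟩ := F.exists_orderEmbOfFin_eq hxF
    simpa [extendOnFinset_apply_orderEmbOfFin] using hδ j
  · simp [extendOnFinset_apply_of_notMem F δ hxF, hxF]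

theorem extendOnFinset_injective : Function.Injective (extendOnFinset F) := by
  refine fun δ δ' h => Equiv.ext fun j => ?_
  simpa [extendOnFinset_apply_orderEmbOfFin] using congrArg (· (F.orderEmbOfFin rfl j)) h

theorem exists_extendOnFinset {w : Perm (Fin n)} (hw : w.support = F) :
    ∃ δ : Perm (Fin #F), (∀ i, δ i ≠ i) ∧ extendOnFinset F δ = w := by
  have hmem (x : Fin n) : w x ∈ F ↔ x ∈ F := hw ▸ Perm.apply_mem_support
  set δ := (F.orderIsoOfFin rfl).toEquiv.symm.permCongr (w.subtypePerm hmem)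
  have hδ (j : Fin #F) : F.orderEmbOfFin rfl (δ j) = w (F.orderEmbOfFin rfl j) := by
    simp [δ, ← coe_orderIsoOfFin_apply]
  refine ⟨δ, fun j hj => ?_, Equiv.ext fun x => ?_⟩
  · have hfix : w (F.orderEmbOfFin rfl j) = F.orderEmbOfFin rfl j := by rw [← hδ, hj]
    exact Perm.mem_support.1 (hw ▸ F.orderEmbOfFin_mem rfl j) hfix
  · by_cases hxF : x ∈ F
    · obtain ⟨j, rfl⟩ := F.exists_orderEmbOfFin_eq hxF
      rw [extendOnFinset_apply_orderEmbOfFin, hδ]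
    · rw [extendOnFinset_apply_of_notMem F δ hxF, eq_comm, ← Perm.notMem_support, hw]
      exact hxF

noncomputable def derangementSupportEquiv :
    {δ : Perm (Fin #F) // ∀ i, δ i ≠ i} ≃ {w : Perm (Fin n) // w.support = F} :=
  Equiv.ofBijective (fun δ => ⟨extendOnFinset F δ, support_extendOnFinset F δ.2⟩)
    ⟨fun _ _ h => Subtype.ext (extendOnFinset_injective F (congrArg Subtype.val h)), by
      rintro ⟨w, hw⟩
      obtain ⟨δ, hδ, rfl⟩ := exists_extendOnFinset F hw
      exact ⟨⟨δ, hδ⟩, rfl⟩⟩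

end support

theorem excCount_le {m : ℕ} (π : Perm (Fin m)) : excCount π ≤ m :=
  (card_filter_le _ _).trans_eq (card_fin m)

theorem derangD_eq_zero {m k : ℕ} (h : m < k) : derangD m k = 0 :=
  Nat.card_eq_zero.2 (Or.inl ⟨fun π => by have := excCount_le π.1; have := π.2.2; omega⟩)

theorem eulerianA_eq_zero {m k : ℕ} (h : m < k) : eulerianA m k = 0 :=
  Nat.card_eq_zero.2 (Or.inl ⟨fun π => by have := excCount_le π.1; have := π.2; omega⟩)

theorem sum_derangements_excCount {M : Type*} [AddCommMonoid M] (m : ℕ) (f : ℕ → M) :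
    ∑ δ : {δ : Perm (Fin m) // ∀ i, δ i ≠ i}, f (excCount δ.1) =
      ∑ k ∈ range (m + 1), derangD m k • f k := by
  rw [← sum_fiberwise_of_maps_to (g := fun δ => excCount δ.1) (t := range (m + 1))
    fun δ _ => mem_range.2 (Nat.lt_succ_of_le (excCount_le δ.1))]
  refine sum_congr rfl fun k _ => ?_
  rw [sum_congr rfl fun δ hδ => by rw [(mem_filter.1 hδ).2], sum_const, derangD,
    Nat.card_eq_fintype_card, ← Fintype.card_subtype]
  exact congrArg (· • f k) (Fintype.card_congr
    (subtypeSubtypeEquivSubtypeInter (fun δ : Perm (Fin m) => ∀ i, δ i ≠ i) (excCount · = k)))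

theorem sum_perm_support_excCount {M : Type*} [AddCommMonoid M] (n : ℕ) (g : ℕ → ℕ → M) :
    ∑ w : Perm (Fin n), g #w.support (excCount w) =
      ∑ m ∈ range (n + 1), n.choose m • ∑ k ∈ range (m + 1), derangD m k • g m k := by
  have hfiber (F : Finset (Fin n)) :
      ∑ w ∈ univ.filter (·.support = F), g #w.support (excCount w) =
        ∑ k ∈ range (#F + 1), derangD #F k • g #F k := by
    rw [sum_subtype (p := (·.support = F)) _ fun w => by simp, ← sum_derangements_excCount]
    refine (Fintype.sum_equiv (derangementSupportEquiv F) _ _ fun δ => ?_).symm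
    change _ = g #(extendOnFinset F δ.1).support (excCount (extendOnFinset F δ.1))
    rw [support_extendOnFinset F δ.2, excCount_extendOnFinset]
  rw [← sum_fiberwise_of_maps_to (g := Perm.support) (t := univ.powerset)
    fun _ _ => mem_powerset.2 (subset_univ _)]
  simp only [hfiber]
  rw [sum_powerset_apply_card fun m => ∑ k ∈ range (m + 1), derangD m k • g m k, card_univ,
    Fintype.card_fin]

theorem eulerianA_eq_sum (m k : ℕ) :
    eulerianA m k = ∑ j ∈ range (m + 1), m.choose j * derangD j k := by
  have h := sum_perm_support_excCount m fun _ k' => if k' = k then 1 else 0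
  simp only [sum_boole, Nat.cast_id, smul_eq_mul, mul_ite, mul_one, mul_zero, sum_ite_eq',
    mem_range] at h
  rw [eulerianA, Nat.card_eq_fintype_card, Fintype.card_subtype, h]
  refine sum_congr rfl fun j _ => ?_
  split_ifs with hkj
  · rfl
  · rw [derangD_eq_zero (by omega), mul_zero]


/-- The `p`-th forward difference of `x ↦ x.choose q` at `j`. -/
theorem sum_neg_one_pow_mul_choose_mul_choose_add (p q j : ℕ) :
    ∑ s ∈ range (p + 1), (-1 : ℤ) ^ (p - s) * p.choose s * (j + s).choose q =
      if p ≤ q then (j.choose (q - p) : ℤ) else 0 := by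
  have h := fwdDiff_iter_eq_sum_shift 1 (fun x => (x.choose q : ℤ)) p j
  simp only [smul_eq_mul, mul_one] at h
  rw [← h]
  split_ifs with hpq
  · obtain ⟨d, rfl⟩ := Nat.exists_eq_add_of_le hpq
    rw [fwdDiff_iter_choose, Nat.add_sub_cancel_left]
  · obtain ⟨d, rfl⟩ : ∃ d, p = d + 1 + q := ⟨p - q - 1, by omega⟩
    have hconst : (fwdDiff 1)^[q] (fun x => (x.choose q : ℤ)) = fun _ => 1 := by
      simpa using fwdDiff_iter_choose 0 q
    rw [Function.iterate_add_apply, hconst, Function.iterate_succ_apply, fwdDiff_const,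
      Function.iterate_fixed (fwdDiff_const 1 (0 : ℤ))]

theorem sum_neg_one_pow_mul_choose_mul_choose_mul_choose {n j k : ℕ} (hj : j ≤ n) (hk : k ≤ n) :
    ∑ m ∈ range (n + 1), (-1 : ℤ) ^ (n - m) * n.choose m * m.choose (n - k) * m.choose j =
      n.choose j * j.choose k := by
  rw [show n + 1 = j + (n - j + 1) by omega, sum_range_add, sum_eq_zero fun m hm => by
      rw [Nat.choose_eq_zero_of_lt (mem_range.1 hm), Nat.cast_zero, mul_zero], zero_add]
  have hterm (s : ℕ) (hs : s ∈ range (n - j + 1)) :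
      (-1 : ℤ) ^ (n - (j + s)) * n.choose (j + s) * (j + s).choose (n - k) * (j + s).choose j =
        n.choose j * ((-1) ^ (n - j - s) * (n - j).choose s * (j + s).choose (n - k)) := by
    have hs : s ≤ n - j := by simp at hs; omega
    have hchoose : (n.choose (j + s) : ℤ) * (j + s).choose j = n.choose j * (n - j).choose s := by
      have := Nat.choose_mul (n := n) (k := j + s) (s := j) (by omega)
      rw [Nat.add_sub_cancel_left] at this
      exact_mod_cast this
    rw [show n - (j + s) = n - j - s by omega]
    linear_combination ((-1 : ℤ) ^ (n - j - s) * (j + s).choose (n - k)) * hchoose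
  rw [sum_congr rfl hterm, ← mul_sum, sum_neg_one_pow_mul_choose_mul_choose_add]
  split_ifs with h
  · rw [show n - k - (n - j) = j - k by omega, Nat.choose_symm (by omega)]
  · rw [Nat.choose_eq_zero_of_lt (by omega : j < k), Nat.cast_zero, mul_zero]

theorem sum_choose_mul_sum_choose_sub_mul_neg_one_pow (n : ℕ) (D : ℕ → ℕ → ℤ) :
    ∑ m ∈ range (n + 1), (n.choose m : ℤ) * ∑ k ∈ range (n + 1),
        m.choose (n - k) * (-1) ^ (n - m) * ∑ j ∈ range (n + 1), m.choose j * D j k =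
      ∑ j ∈ range (n + 1), (n.choose j : ℤ) * ∑ k ∈ range (n + 1), j.choose k * D j k := by
  calc _ = ∑ m ∈ range (n + 1), ∑ k ∈ range (n + 1), ∑ j ∈ range (n + 1),
          (-1 : ℤ) ^ (n - m) * n.choose m * m.choose (n - k) * m.choose j * D j k := by
        simp only [mul_sum]
        exact sum_congr rfl fun m _ => sum_congr rfl fun k _ => sum_congr rfl fun j _ => by ring
    _ = ∑ j ∈ range (n + 1), ∑ k ∈ range (n + 1), ∑ m ∈ range (n + 1),
          (-1 : ℤ) ^ (n - m) * n.choose m * m.choose (n - k) * m.choose j * D j k := by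
        rw [sum_congr rfl fun m _ => sum_comm, sum_comm]
        exact sum_congr rfl fun j _ => sum_comm
    _ = _ := by
        simp only [← sum_mul, mul_sum]
        refine sum_congr rfl fun j hj => sum_congr rfl fun k hk => ?_
        rw [sum_neg_one_pow_mul_choose_mul_choose_mul_choose (by simp at hj; omega)
          (by simp at hk; omega), mul_assoc]

theorem card_boundedAffinePerm_eq_sum_derangD (n : ℕ) [NeZero n] :
    Nat.card {σ : ℤ → ℤ // IsBoundedAffinePerm n σ} =
      ∑ m ∈ range (n + 1), n.choose m * ∑ k ∈ range (m + 1), m.choose k * derangD m k := by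
  rw [card_boundedAffinePerm_eq_sum_choose, sum_perm_support_excCount n fun m k => m.choose k]
  simp only [smul_eq_mul, mul_comm (derangD _ _)]

theorem sum_choose_mul_derangD_eq_sum_eulerianA (n : ℕ) :
    ∑ m ∈ range (n + 1), (n.choose m : ℤ) * ∑ k ∈ range (m + 1), (m.choose k : ℤ) * derangD m k =
      ∑ m ∈ range (n + 1), (n.choose m : ℤ) *
        ∑ k ∈ range (m + 1), (m.choose (n - k) : ℤ) * (-1) ^ (n - m) * eulerianA m k := by
  have hle {m : ℕ} (hm : m ∈ range (n + 1)) : m ≤ n := Nat.lt_succ_iff.1 (mem_range.1 hm)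
  calc _ = ∑ m ∈ range (n + 1), (n.choose m : ℤ) *
          ∑ k ∈ range (n + 1), (m.choose k : ℤ) * derangD m k :=
        sum_congr rfl fun m hm => by
          rw [sum_range_succ_eq_of_le (hle hm) fun k hk => by rw [derangD_eq_zero hk]; simp]
    _ = ∑ m ∈ range (n + 1), (n.choose m : ℤ) * ∑ k ∈ range (n + 1), m.choose (n - k) *
          (-1) ^ (n - m) * ∑ j ∈ range (n + 1), m.choose j * (derangD j k : ℤ) :=
        (sum_choose_mul_sum_choose_sub_mul_neg_one_pow n fun j k => derangD j k).symm
    _ = _ := by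
        refine sum_congr rfl fun m hm => ?_
        rw [sum_range_succ_eq_of_le (hle hm) fun k hk => by rw [eulerianA_eq_zero hk]; simp]
        refine congrArg _ (sum_congr rfl fun k _ => ?_)
        rw [eulerianA_eq_sum, sum_range_succ_eq_of_le (hle hm) fun j hj => by
          rw [Nat.choose_eq_zero_of_lt hj, zero_mul]]
        push_cast
        rfl

/-- exact enumeration of bounded affine permutations:
`|S̃//ₙ| = ∑_{m=0}^n C(n,m) ∑_{k=0}^m C(m,k) d(m,k)`
`       = ∑_{m=0}^n C(n,m) ∑_{k=0}^m C(m,n−k) (−1)^{n−m} a(m,k)`. -/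
theorem stmt17 (n : ℕ) (hn : 1 ≤ n) :
    Nat.card {σ : ℤ → ℤ // IsBoundedAffinePerm n σ} =
      (∑ m ∈ Finset.range (n + 1), Nat.choose n m *
        ∑ k ∈ Finset.range (m + 1), Nat.choose m k * derangD m k) ∧
    (Nat.card {σ : ℤ → ℤ // IsBoundedAffinePerm n σ} : ℤ) =
      ∑ m ∈ Finset.range (n + 1), (Nat.choose n m : ℤ) *
        ∑ k ∈ Finset.range (m + 1),
          (Nat.choose m (n - k) : ℤ) * (-1 : ℤ) ^ (n - m) * eulerianA m k := by
  have : NeZero n := ⟨by omega⟩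
  have hcount := card_boundedAffinePerm_eq_sum_derangD n
  refine ⟨hcount, ?_⟩
  rw [hcount, ← sum_choose_mul_derangD_eq_sum_eulerianA]
  push_cast
  rfl
end

section
/- For all n ≥ 0 and 0 ≤ k ≤ n, d(n,k) = d(n, n−k); that is, the number of derangements of size n with exactly k excedances equals the number of derangements of size n with exactly n−k excedances. -/
open Finset

theorem Equiv.Perm.card_filter_lt_inv_apply {α : Type*} [Fintype α] [LinearOrder α]
    (σ : Equiv.Perm α) : #{i | i < σ⁻¹ i} = #{i | σ i < i} :=
  card_equiv σ.symm fun i => by simp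

theorem Equiv.Perm.card_filter_lt_apply_add_card_filter_apply_lt {α : Type*} [Fintype α]
    [LinearOrder α] (σ : Equiv.Perm α) (hσ : ∀ i, σ i ≠ i) :
    #{i | i < σ i} + #{i | σ i < i} = Fintype.card α := by
  rw [← card_univ, ← card_filter_add_card_filter_not (s := univ) (fun i => i < σ i)]
  congr 2
  ext i
  simp [le_iff_lt_or_eq, hσ i]

theorem excCount_add_excCount_inv {n : ℕ} (π : Equiv.Perm (Fin n)) (hπ : ∀ i, π i ≠ i) :
    excCount π + excCount π⁻¹ = n := by
  rw [excCount, excCount, π.card_filter_lt_inv_apply,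
    π.card_filter_lt_apply_add_card_filter_apply_lt hπ, Fintype.card_fin]

theorem Equiv.Perm.forall_inv_apply_ne_self_iff {α : Type*} (σ : Equiv.Perm α) :
    (∀ i, σ⁻¹ i ≠ i) ↔ ∀ i, σ i ≠ i :=
  ⟨fun h i => by simpa [eq_comm] using h (σ i), fun h i => by simpa [eq_comm] using h (σ⁻¹ i)⟩

/-- the derangement Eulerian numbers are symmetric: `d(n,k) = d(n,n−k)`. -/
theorem stmt18 (n k : ℕ) (hk : k ≤ n) : derangD n k = derangD n (n - k) := by
  refine Nat.card_congr (Equiv.subtypeEquiv (Equiv.inv _) fun π => ?_)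
  change _ ↔ (∀ i, π⁻¹ i ≠ i) ∧ excCount π⁻¹ = n - k
  rw [π.forall_inv_apply_ne_self_iff]
  refine and_congr_right fun hπ => ?_
  have := excCount_add_excCount_inv π hπ
  omega
end
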